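/- arXiv:2205.04934 — 6 statements merged into one kernel-verified Lean document; each statement's English description precedes it below -/
import Mathlib

section
/- Define z : ℕ → ℕ × ℕ by bit de-interleaving: if t = Σ_i b_i·2^i with b_i ∈ {0,1}, then z(t) = (x(t), y(t)) where x(t) = Σ_i b_{2i}·2^i and y(t) = Σ_i b_{2i+1}·2^i. Then for every k ≥ 0, Σ_{t=0}^{4^k − 2} ( |x(t+1) − x(t)| + |y(t+1) − y(t)| ) ≤ 3·4^k. -/
/-!
Write `z(t) = (zOrderX t, zOrderY t)`. Since the bits of `4^k * u + t` (for `t < 4^k`) are those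
of `t` followed by those of `u`, de-interleaving gives `z(4^k u + t) = z(t) + 2^k z(u)`. Hence,
cutting `[0, 4^(k+1))` into the four quadrant blocks `[4^k u, 4^k (u + 1))`, every step inside a
block repeats a step of the first block, while the step leaving block `u` is the step `u → u + 1`
of the order-1 curve scaled by `2^k`; the first block ends with the step `4^k - 1 → 4^k` of length
`2^k`. So the total length `F k` of the steps starting in `[0, 4^k)` satisfies
`F (k + 1) = 4 (F k - 2^k) + 2^k (1 + 2 + 1 + 2)`, whence `F k = 2·4^k - 2^k`.
-/

/-- `zOrderX t = Σ_i b_{2i}·2^i`, where `t = Σ_i b_i·2^i`: the x-coordinate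
obtained by de-interleaving the bits of `t`. (Bits of index `2i` with `i ≥ t`
vanish since `2^(2i) > t`, so summing over `i < t` captures all bits.) -/
def zOrderX (t : ℕ) : ℕ :=
  ∑ i ∈ Finset.range t, if t.testBit (2 * i) then 2 ^ i else 0

/-- `zOrderY t = Σ_i b_{2i+1}·2^i`: the y-coordinate obtained by
de-interleaving the bits of `t`. -/
def zOrderY (t : ℕ) : ℕ :=
  ∑ i ∈ Finset.range t, if t.testBit (2 * i + 1) then 2 ^ i else 0

open Finset

def deinterleave (r n t : ℕ) : ℕ :=
  ∑ i ∈ range n, if t.testBit (2 * i + r) then 2 ^ i else 0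

theorem zOrderX_eq_deinterleave (t : ℕ) : zOrderX t = deinterleave 0 t t := rfl

theorem zOrderY_eq_deinterleave (t : ℕ) : zOrderY t = deinterleave 1 t t := rfl

theorem four_pow_eq_two_pow (n : ℕ) : 4 ^ n = 2 ^ (2 * n) := by
  rw [pow_mul]; norm_num

section Deinterleave

variable {r n t : ℕ}

theorem deinterleave_of_le {m : ℕ} (ht : t < 4 ^ n) (hnm : n ≤ m) :
    deinterleave r m t = deinterleave r n t := by
  refine (sum_subset (range_subset_range.2 hnm) fun i _ hi => ?_).symm
  have hi : n ≤ i := by simpa using hi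
  have : t < 2 ^ (2 * i + r) := ht.trans_le <| by
    rw [four_pow_eq_two_pow]; exact Nat.pow_le_pow_right two_pos (by omega)
  simp [Nat.testBit_lt_two_pow this]

theorem deinterleave_self (ht : t < 4 ^ n) : deinterleave r t t = deinterleave r n t := by
  rw [← deinterleave_of_le (Nat.lt_pow_self (by norm_num)) (le_max_left t n),
    deinterleave_of_le ht (le_max_right t n)]

theorem deinterleave_four_pow_mul_add (hr : r ≤ 1) (ht : t < 4 ^ n) (m u : ℕ) :
    deinterleave r (n + m) (4 ^ n * u + t) = deinterleave r n t + 2 ^ n * deinterleave r m u := by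
  rw [four_pow_eq_two_pow] at ht ⊢
  rw [deinterleave, sum_range_add, deinterleave, deinterleave, mul_sum]
  congr 1 <;> refine sum_congr rfl fun i hi => ?_
  · rw [Nat.testBit_two_pow_mul_add u ht, if_pos (show 2 * i + r < 2 * n by simp at hi; omega)]
  · rw [Nat.testBit_two_pow_mul_add u ht, if_neg (show ¬ 2 * (n + i) + r < 2 * n by omega),
      show 2 * (n + i) + r - 2 * n = 2 * i + r by omega]
    split_ifs <;> simp [pow_add]

theorem deinterleave_four_pow_sub_one (hr : r ≤ 1) (n : ℕ) :
    deinterleave r n (4 ^ n - 1) = 2 ^ n - 1 := by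
  rw [four_pow_eq_two_pow, deinterleave, ← Nat.div_one (2 ^ n - 1), ← Nat.geomSum_eq le_rfl]
  refine sum_congr rfl fun i hi => ?_
  rw [Nat.testBit_two_pow_sub_one, if_pos (by simp at hi ⊢; omega)]

theorem deinterleave_self_four_pow_mul_add (hr : r ≤ 1) (ht : t < 4 ^ n) (u : ℕ) :
    deinterleave r (4 ^ n * u + t) (4 ^ n * u + t) =
      deinterleave r t t + 2 ^ n * deinterleave r u u := by
  have hu : u < 4 ^ u := Nat.lt_pow_self (by norm_num)
  have hlt : 4 ^ n * u + t < 4 ^ (n + u) := calc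
    4 ^ n * u + t < 4 ^ n * (u + 1) := by rw [mul_add_one]; omega
    _ ≤ 4 ^ n * 4 ^ u := Nat.mul_le_mul_left _ hu
    _ = 4 ^ (n + u) := (pow_add ..).symm
  rw [deinterleave_self hlt, deinterleave_four_pow_mul_add hr ht, deinterleave_self ht,
    deinterleave_self hu]

end Deinterleave

theorem zOrderX_four_pow_mul_add {k t : ℕ} (ht : t < 4 ^ k) (u : ℕ) :
    zOrderX (4 ^ k * u + t) = zOrderX t + 2 ^ k * zOrderX u :=
  deinterleave_self_four_pow_mul_add zero_le_one ht u

theorem zOrderY_four_pow_mul_add {k t : ℕ} (ht : t < 4 ^ k) (u : ℕ) :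
    zOrderY (4 ^ k * u + t) = zOrderY t + 2 ^ k * zOrderY u :=
  deinterleave_self_four_pow_mul_add le_rfl ht u

theorem zOrderX_four_pow_sub_one (k : ℕ) : zOrderX (4 ^ k - 1) = 2 ^ k - 1 := by
  rw [zOrderX_eq_deinterleave, deinterleave_self (n := k) (by simp),
    deinterleave_four_pow_sub_one zero_le_one]

theorem zOrderY_four_pow_sub_one (k : ℕ) : zOrderY (4 ^ k - 1) = 2 ^ k - 1 := by
  rw [zOrderY_eq_deinterleave, deinterleave_self (n := k) (by simp),
    deinterleave_four_pow_sub_one le_rfl]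

def zStep (t : ℕ) : ℕ :=
  ((zOrderX (t + 1) : ℤ) - zOrderX t).natAbs + ((zOrderY (t + 1) : ℤ) - zOrderY t).natAbs

theorem zStep_four_pow_mul_add (u : ℕ) {k t : ℕ} (ht : t + 1 < 4 ^ k) :
    zStep (4 ^ k * u + t) = zStep t := by
  simp only [zStep, add_assoc, zOrderX_four_pow_mul_add ht, zOrderY_four_pow_mul_add ht,
    zOrderX_four_pow_mul_add (t.lt_succ_self.trans ht), Nat.cast_add,
    zOrderY_four_pow_mul_add (t.lt_succ_self.trans ht), add_sub_add_right_eq_sub]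

theorem zStep_four_pow_mul_add_four_pow_sub_one {u : ℕ} (hu : u < 4) (k : ℕ) :
    zStep (4 ^ k * u + (4 ^ k - 1)) = 2 ^ k * zStep u := by
  have hpos : 0 < 4 ^ k := by positivity
  have hnext : 4 ^ k * u + (4 ^ k - 1) + 1 = 4 ^ k * (u + 1) + 0 := by rw [mul_add_one]; omega
  rw [zStep, hnext, zOrderX_four_pow_mul_add hpos, zOrderY_four_pow_mul_add hpos,
    zOrderX_four_pow_mul_add (Nat.sub_lt hpos one_pos), zOrderX_four_pow_sub_one,
    zOrderY_four_pow_mul_add (Nat.sub_lt hpos one_pos), zOrderY_four_pow_sub_one]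
  obtain ⟨q, hq⟩ : ∃ q, 2 ^ k = q + 1 := Nat.exists_eq_add_one.2 (by positivity)
  obtain ⟨x0, x1, x2, x3, x4⟩ :
      zOrderX 0 = 0 ∧ zOrderX 1 = 1 ∧ zOrderX 2 = 0 ∧ zOrderX 3 = 1 ∧ zOrderX 4 = 2 := by
    decide
  obtain ⟨y0, y1, y2, y3, y4⟩ :
      zOrderY 0 = 0 ∧ zOrderY 1 = 0 ∧ zOrderY 2 = 1 ∧ zOrderY 3 = 1 ∧ zOrderY 4 = 0 := by
    decide
  rw [hq]
  interval_cases u <;> simp only [zStep, x0, x1, x2, x3, x4, y0, y1, y2, y3, y4] <;>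
    push_cast <;> omega

theorem sum_range_mul_eq_sum_sum {M : Type*} [AddCommMonoid M] (f : ℕ → M) (N m : ℕ) :
    ∑ t ∈ range (N * m), f t = ∑ u ∈ range m, ∑ t ∈ range N, f (N * u + t) := by
  induction m with
  | zero => simp
  | succ m ih => rw [Nat.mul_succ, sum_range_add, ih, sum_range_succ]

theorem sum_zStep_block {u : ℕ} (hu : u < 4) (k : ℕ) :
    ∑ t ∈ range (4 ^ k), zStep (4 ^ k * u + t) + 2 ^ k =
      ∑ t ∈ range (4 ^ k), zStep t + 2 ^ k * zStep u := by
  have hsplit (f : ℕ → ℕ) :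
      ∑ t ∈ range (4 ^ k), f t = ∑ t ∈ range (4 ^ k - 1), f t + f (4 ^ k - 1) := by
    rw [← sum_range_succ, Nat.sub_add_cancel (Nat.one_le_pow k 4 four_pos)]
  have hfirst := zStep_four_pow_mul_add_four_pow_sub_one (u := 0) (by norm_num) k
  have hzero : zStep 0 = 1 := by decide
  rw [mul_zero, zero_add, hzero, mul_one] at hfirst
  rw [hsplit, hsplit, zStep_four_pow_mul_add_four_pow_sub_one hu, hfirst,
    sum_congr rfl fun t ht => zStep_four_pow_mul_add u (by simp at ht; omega)]
  ring

theorem sum_zStep_range_four_pow (k : ℕ) :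
    ∑ t ∈ range (4 ^ k), zStep t + 2 ^ k = 2 * 4 ^ k := by
  induction k with
  | zero => decide
  | succ k ih =>
    have hblocks : ∑ t ∈ range (4 ^ (k + 1)), zStep t + 4 * 2 ^ k =
        4 * ∑ t ∈ range (4 ^ k), zStep t + 2 ^ k * ∑ u ∈ range 4, zStep u := calc
      _ = ∑ u ∈ range 4, (∑ t ∈ range (4 ^ k), zStep (4 ^ k * u + t) + 2 ^ k) := by
        rw [pow_succ, sum_range_mul_eq_sum_sum, sum_add_distrib, sum_const, card_range, smul_eq_mul]
      _ = ∑ u ∈ range 4, (∑ t ∈ range (4 ^ k), zStep t + 2 ^ k * zStep u) :=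
        sum_congr rfl fun u hu => sum_zStep_block (mem_range.1 hu) k
      _ = _ := by rw [sum_add_distrib, sum_const, card_range, smul_eq_mul, ← mul_sum]
    have hsix : ∑ u ∈ range 4, zStep u = 6 := by decide
    rw [hsix] at hblocks
    rw [pow_succ, pow_succ] at *
    omega

/-- Traversing the `2^k × 2^k` grid along the Z-order (Morton) curve
`t ↦ (zOrderX t, zOrderY t)` has total Manhattan length at most `3·4^k`. -/
theorem zorder_total_length (k : ℕ) :
    ∑ t ∈ Finset.range (4 ^ k - 1),
        (((zOrderX (t + 1) : ℤ) - zOrderX t).natAbs +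
          ((zOrderY (t + 1) : ℤ) - zOrderY t).natAbs)
      ≤ 3 * 4 ^ k := by
  show ∑ t ∈ range (4 ^ k - 1), zStep t ≤ 3 * 4 ^ k
  calc ∑ t ∈ range (4 ^ k - 1), zStep t
      ≤ ∑ t ∈ range (4 ^ k), zStep t :=
        sum_le_sum_of_subset (range_subset_range.2 (Nat.sub_le _ _))
    _ ≤ 2 * 4 ^ k := (Nat.le_add_right _ _).trans_eq (sum_zStep_range_four_pow k)
    _ ≤ 3 * 4 ^ k := Nat.mul_le_mul_right _ (by norm_num)
end

section
/- For all integers h, w ≥ 1: Σ_{i=0}^{h−1} Σ_{j=0}^{w−1} ( |(h−1−i) − i| + |(w−1−j) − j| ) = w·⌊h²/2⌋ + h·⌊w²/2⌋. Consequently, for all h, w ≥ 2 this sum is at least max(h,w)²·min(h,w)/3. -/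
/-!
The displacement separates into a row part and a column part, so the double sum is
`w` times a one-dimensional sum over rows plus `h` times one over columns.  In one
dimension the reversal of `n` cells moves cell `i` by `|n - 1 - 2i|`; removing the two end
cells (each moved by `n - 1`) leaves the same configuration for `n - 2` cells, whence the sum
is `⌊n²/2⌋`.  For the lower bound keep only the term of the larger side `M`, and use
`⌊M²/2⌋ ≥ M²/3` for `M ≥ 2`.
-/

open Finset

theorem sum_sum_add_eq {ι κ R : Type*} [CommSemiring R] (s : Finset ι) (t : Finset κ)
    (f : ι → R) (g : κ → R) :
    ∑ i ∈ s, ∑ j ∈ t, (f i + g j) = #t * ∑ i ∈ s, f i + #s * ∑ j ∈ t, g j := by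
  simp only [sum_add_distrib, sum_const, nsmul_eq_mul, mul_sum]

theorem sum_range_natAbs_reverse_sub :
    ∀ n : ℕ, ∑ i ∈ range n, ((n : ℤ) - 1 - i - i).natAbs = n ^ 2 / 2
  | 0 => rfl
  | 1 => rfl
  | n + 2 => by
    have inner : ∑ i ∈ range n, (((n + 2 : ℕ) : ℤ) - 1 - (i + 1 : ℕ) - (i + 1 : ℕ)).natAbs
        = ∑ i ∈ range n, ((n : ℤ) - 1 - i - i).natAbs :=
      sum_congr rfl fun i _ => by push_cast; ring_nf
    have hsq : (n + 2) ^ 2 = n ^ 2 + 4 * n + 4 := by ring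
    rw [sum_range_succ', sum_range_succ, inner, sum_range_natAbs_reverse_sub n, hsq]
    push_cast
    omega

theorem sq_mul_le_three_mul_half_sq {M : ℕ} (m : ℕ) (hM : 2 ≤ M) :
    M ^ 2 * m ≤ 3 * (m * (M ^ 2 / 2)) := by
  have hM2 : M ^ 2 ≤ 3 * (M ^ 2 / 2) := by
    have : 4 ≤ M ^ 2 := by nlinarith
    omega
  nlinarith

theorem permutation_energy_lower_bound_general (h w : ℕ) :
    (∑ i ∈ Finset.range h, ∑ j ∈ Finset.range w,
        ((((h : ℤ) - 1 - i) - i).natAbs + (((w : ℤ) - 1 - j) - j).natAbs))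
      = w * (h ^ 2 / 2) + h * (w ^ 2 / 2) ∧
    (2 ≤ h → 2 ≤ w →
      max h w ^ 2 * min h w ≤
        3 * ∑ i ∈ Finset.range h, ∑ j ∈ Finset.range w,
          ((((h : ℤ) - 1 - i) - i).natAbs + (((w : ℤ) - 1 - j) - j).natAbs)) := by
  have total : (∑ i ∈ Finset.range h, ∑ j ∈ Finset.range w,
        ((((h : ℤ) - 1 - i) - i).natAbs + (((w : ℤ) - 1 - j) - j).natAbs))
      = w * (h ^ 2 / 2) + h * (w ^ 2 / 2) := by
    rw [sum_sum_add_eq, card_range, card_range, sum_range_natAbs_reverse_sub,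
      sum_range_natAbs_reverse_sub, Nat.cast_id, Nat.cast_id]
  refine ⟨total, fun hh hw => total ▸ ?_⟩
  rcases le_total h w with hle | hle
  · rw [max_eq_right hle, min_eq_left hle]
    exact (sq_mul_le_three_mul_half_sq h hw).trans (by omega)
  · rw [max_eq_left hle, min_eq_right hle]
    exact (sq_mul_le_three_mul_half_sq w hh).trans (by omega)

/-- Counting core of the permutation energy lower bound: reversing the
row-major order of an `h × w` grid moves the element at cell `(i, j)` to cell
`(h−1−i, w−1−j)`, for a total Manhattan distance of exactly
`w·⌊h²/2⌋ + h·⌊w²/2⌋`, which for `h, w ≥ 2` is at least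
`max(h,w)²·min(h,w)/3`. -/
theorem permutation_energy_lower_bound (h w : ℕ) (hh : 1 ≤ h) (hw : 1 ≤ w) :
    (∑ i ∈ Finset.range h, ∑ j ∈ Finset.range w,
        ((((h : ℤ) - 1 - i) - i).natAbs + (((w : ℤ) - 1 - j) - j).natAbs))
      = w * (h ^ 2 / 2) + h * (w ^ 2 / 2) ∧
    (2 ≤ h → 2 ≤ w →
      max h w ^ 2 * min h w ≤
        3 * ∑ i ∈ Finset.range h, ∑ j ∈ Finset.range w,
          ((((h : ℤ) - 1 - i) - i).natAbs + (((w : ℤ) - 1 - j) - j).natAbs)) :=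
  permutation_energy_lower_bound_general h w
end

section
/- Let α be a linear order, let A : Fin a → α and B : Fin b → α be strictly monotone maps whose ranges are disjoint (so all a + b values are distinct and each array is sorted), and let m ≥ 1. Define the sample S as the multiset { A(i·m − 1) : 1 ≤ i ≤ ⌊a/m⌋ } ∪ { B(j·m − 1) : 1 ≤ j ≤ ⌊b/m⌋ } (positions are 1-indexed, i.e., every m-th element of each array). For 1 ≤ l ≤ |S|, let s be the l-th smallest element of S. Then the number of elements of the combined multiset (range of A together with range of B) that are ≤ s is at least l·m and at most l·m + 2·(m − 1). -/
/-!
If `c` entries of a sorted array are `≤ s`, they form a prefix, so the entries sampled at positions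
`m, 2m, …` that are `≤ s` are exactly the first `⌊c/m⌋` samples. The sample has no repeated values,
so its `l`-th smallest element `s` has exactly `l` samples `≤ s`, whence `⌊c_A/m⌋ + ⌊c_B/m⌋ = l`;
both bounds then follow from `c - m < ⌊c/m⌋·m ≤ c`.
-/

open Finset

theorem Fin.lt_card_filter_iff_of_antitone {n : ℕ} {P : Fin n → Prop} [DecidablePred P]
    (hP : Antitone P) (k : Fin n) : (k : ℕ) < #{j | P j} ↔ P k := by
  constructor
  · intro hk
    by_contra hPk
    have hsub : ({j | P j} : Finset (Fin n)) ⊆ Iio k := fun j hj =>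
      mem_Iio.2 <| lt_of_not_ge fun hkj => hPk (hP hkj (mem_filter.1 hj).2)
    have := card_le_card hsub
    rw [Fin.card_Iio] at this
    omega
  · intro hPk
    have hsub : Iic k ⊆ ({j | P j} : Finset (Fin n)) := fun j hj =>
      mem_filter.2 ⟨mem_univ j, hP (mem_Iic.1 hj) hPk⟩
    simpa [Fin.card_Iic] using card_le_card hsub

theorem Monotone.lt_countP_le_iff {α : Type*} [Preorder α] [DecidableLE α] {n : ℕ}
    {f : Fin n → α} (hf : Monotone f) (s : α) (k : Fin n) :
    (k : ℕ) < (univ.val.map f).countP (· ≤ s) ↔ f k ≤ s := by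
  rw [Multiset.countP_map, ← filter_val]
  exact Fin.lt_card_filter_iff_of_antitone (fun i j hij h => (hf hij).trans h) k

theorem Multiset.countP_le_getElem_sort {α : Type*} [LinearOrder α] {S : Multiset α}
    (hS : S.Nodup) {k : ℕ} {s : α} (hs : (S.sort (· ≤ ·))[k]? = some s) :
    S.countP (· ≤ s) = k + 1 := by
  set L := S.sort (· ≤ ·)
  obtain ⟨hk, rfl⟩ := List.getElem?_eq_some_iff.1 hs
  have hL : L.SortedLT :=
    (pairwise_sort S _).sortedLE.sortedLT_of_nodup (by rw [← coe_nodup, sort_eq]; exact hS)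
  have hLS : univ.val.map L.get = S := by
    rw [← sort_eq S (· ≤ ·), Fin.univ_def, map_coe, List.map_get_finRange]
  rw [← hLS, countP_map, ← filter_val]
  calc #{j | L.get j ≤ L.get ⟨k, hk⟩} = #{j | j ≤ (⟨k, hk⟩ : Fin L.length)} := by
        simp only [hL.strictMono_get.le_iff_le]
    _ = k + 1 := by rw [filter_ge_eq_Iic, Fin.card_Iic]

theorem Nat.mul_sub_one_lt_of_mem_Icc {i n m : ℕ} (hi : i ∈ Icc 1 (n / m)) : i * m - 1 < n := by
  obtain ⟨h1, h2⟩ := mem_Icc.1 hi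
  have := Nat.mul_le_of_le_div m i n h2
  have := Nat.div_le_self n m
  omega

def sampleEvery {α : Type*} {n : ℕ} (m : ℕ) (f : Fin n → α) : Multiset α :=
  (Icc 1 (n / m)).attach.val.map fun i => f ⟨i.1 * m - 1, Nat.mul_sub_one_lt_of_mem_Icc i.2⟩

section sampleEvery

variable {α : Type*} {n m : ℕ} {f : Fin n → α}

theorem Monotone.countP_le_sampleEvery [Preorder α] [DecidableLE α] (hf : Monotone f)
    (hm : 0 < m) (s : α) :
    (sampleEvery m f).countP (· ≤ s) = (univ.val.map f).countP (· ≤ s) / m := by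
  set c := (univ.val.map f).countP (· ≤ s)
  have hc : c ≤ n := (Multiset.countP_le_card _ _).trans (by simp)
  have hfilter : {i ∈ Icc 1 (n / m) | i * m - 1 < c} = Icc 1 (c / m) := by
    ext i
    simp only [mem_filter, mem_Icc, Nat.le_div_iff_mul_le hm]
    have := Nat.le_mul_of_pos_right i hm
    omega
  calc (sampleEvery m f).countP (· ≤ s)
      = (Icc 1 (n / m)).attach.val.countP (fun i => i.1 * m - 1 < c) := by
        rw [sampleEvery, Multiset.countP_map, ← Multiset.countP_eq_card_filter]
        exact Multiset.countP_congr rfl fun i _ => propext (hf.lt_countP_le_iff s _).symm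
    _ = #{i ∈ Icc 1 (n / m) | i * m - 1 < c} := by
        rw [attach_val]
        exact (Multiset.countP_attach (p := fun i => i * m - 1 < c) _).trans
          (Multiset.countP_eq_card_filter _ _)
    _ = c / m := by rw [hfilter, Nat.card_Icc, Nat.add_sub_cancel]

theorem Function.Injective.nodup_sampleEvery (hf : Function.Injective f) (hm : 0 < m) :
    (sampleEvery m f).Nodup := by
  refine (Icc 1 (n / m)).attach.nodup.map fun i j hij => ?_
  have h : i.1 * m - 1 = j.1 * m - 1 := congrArg Fin.val (hf hij)
  have hi := Nat.le_mul_of_pos_right i.1 hm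
  have hj := Nat.le_mul_of_pos_right j.1 hm
  have hi1 := (mem_Icc.1 i.2).1
  have hj1 := (mem_Icc.1 j.2).1
  exact Subtype.ext <| Nat.eq_of_mul_eq_mul_right hm (by omega)

end sampleEvery

/-- Correctness core of deterministic sampling for rank selection in two
sorted arrays: if `S` samples every `m`-th element of the sorted arrays `A`
and `B` (with disjoint ranges), and `s` is the `l`-th smallest element of
`S`, then the number of elements of `A‖B` that are `≤ s` is between `l·m`
and `l·m + 2·(m − 1)`. -/
theorem deterministic_sampling_rank {α : Type*} [LinearOrder α]
    {a b m : ℕ} (hm : 1 ≤ m)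
    (A : Fin a → α) (B : Fin b → α)
    (hA : StrictMono A) (hB : StrictMono B)
    (hdisj : ∀ (i : Fin a) (j : Fin b), A i ≠ B j)
    (S : Multiset α)
    (hS : S =
      ((Finset.Icc 1 (a / m)).attach.val.map fun i => A
        ⟨i.1 * m - 1, by
          obtain ⟨h1, h2⟩ := Finset.mem_Icc.mp i.2
          have h3 : i.1 * m ≤ a / m * m := Nat.mul_le_mul_right m h2
          have h4 : a / m * m ≤ a := Nat.div_mul_le_self a m
          have h5 : 1 * 1 ≤ i.1 * m := Nat.mul_le_mul h1 hm
          omega⟩) +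
      ((Finset.Icc 1 (b / m)).attach.val.map fun j => B
        ⟨j.1 * m - 1, by
          obtain ⟨h1, h2⟩ := Finset.mem_Icc.mp j.2
          have h3 : j.1 * m ≤ b / m * m := Nat.mul_le_mul_right m h2
          have h4 : b / m * m ≤ b := Nat.div_mul_le_self b m
          have h5 : 1 * 1 ≤ j.1 * m := Nat.mul_le_mul h1 hm
          omega⟩))
    (l : ℕ) (hl1 : 1 ≤ l)
    (s : α) (hs : (S.sort (· ≤ ·))[l - 1]? = some s) :
    l * m ≤
      Multiset.countP (fun x => x ≤ s)
        (Multiset.map A Finset.univ.val + Multiset.map B Finset.univ.val) ∧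
    Multiset.countP (fun x => x ≤ s)
        (Multiset.map A Finset.univ.val + Multiset.map B Finset.univ.val)
      ≤ l * m + 2 * (m - 1) := by
  have hS' : S = sampleEvery m A + sampleEvery m B := hS
  have hnodup : S.Nodup := by
    rw [hS', Multiset.nodup_add, Multiset.disjoint_left]
    refine ⟨hA.injective.nodup_sampleEvery hm, hB.injective.nodup_sampleEvery hm, ?_⟩
    intro x hxA hxB
    obtain ⟨i, -, rfl⟩ := Multiset.mem_map.1 hxA
    obtain ⟨j, -, hj⟩ := Multiset.mem_map.1 hxB
    exact hdisj _ _ hj.symm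
  set cA := (univ.val.map A).countP (· ≤ s)
  set cB := (univ.val.map B).countP (· ≤ s)
  have hsplit : cA / m + cB / m = l := by
    rw [← hA.monotone.countP_le_sampleEvery hm, ← hB.monotone.countP_le_sampleEvery hm,
      ← Multiset.countP_add, ← hS', Multiset.countP_le_getElem_sort hnodup hs]
    omega
  rw [Multiset.countP_add, ← hsplit, add_mul]
  have := Nat.div_mul_le_self cA m
  have := Nat.div_mul_le_self cB m
  have := Nat.lt_div_mul_add (a := cA) hm
  have := Nat.lt_div_mul_add (a := cB) hm
  omega
end

section
/- Let n ≥ 2 be an integer, c ≥ 3 a real number, and N, k positive integers with c² ≤ N ≤ n, 2k ≤ N, and k ≥ (1/2)·N^{3/4}·√(ln n). Let K be a binomial random variable with k trials and success probability p = c/√N, and let μ = c·k/√N (= E[K]). Then P( |K − μ| ≥ (c/2)·N^{1/4}·√(ln n) ) ≤ 2·n^{−c/6}. -/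
/-!
Chernoff: for `X ~ Bin(k, p)` with mean `μ = k p`, `E[e^{sX}] ≤ exp (μ (e^s - 1))`. Choosing
`s = ± 2t / (3μ)` (so `|s| ≤ 2/3` once `t ≤ μ`) and using `e^s ≤ 1 + s + 3/4 s²` bounds each
tail `P(±(X - μ) ≥ t)` by `exp (-t² / (3μ))`. Here `t = (c/2) N^{1/4} √(ln n)`: the lower
bound on `k` gives `t ≤ μ`, and `2k ≤ N` gives `μ ≤ (c/2) √N`, whence `t² / (3μ) ≥ (c/6) ln n`.
-/

set_option linter.deprecated false

open Real ProbabilityTheory MeasureTheory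
open scoped NNReal ENNReal

theorem Real.exp_le_one_add_add_three_quarters_mul_sq {x : ℝ} (hx : |x| ≤ 2 / 3) :
    exp x ≤ 1 + x + 3 / 4 * x ^ 2 := by
  -- Taylor remainder after `1 + x + x²/2`: at most `(2/9)|x|³ ≤ (4/27) x²`
  have hTaylor :=
    (abs_sub_le_iff.1 (Real.exp_bound (x := x) (by linarith) (n := 3) (by norm_num))).1
  have hcube : |x| ^ 3 ≤ 2 / 3 * x ^ 2 := by
    rw [pow_succ, sq_abs]; nlinarith [sq_nonneg x]
  norm_num [Finset.sum_range_succ, Nat.factorial] at hTaylor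
  nlinarith [sq_nonneg x]

theorem mul_exp_sub_one_sub_sub_abs_mul_le {μ t s : ℝ} (hμ : 0 < μ) (htμ : t ≤ μ)
    (hs : |s| = 2 * t / (3 * μ)) : μ * (exp s - 1 - s) - |s| * t ≤ -(t ^ 2 / (3 * μ)) := by
  have hs23 : |s| ≤ 2 / 3 := by
    rw [hs, div_le_iff₀ (by positivity)]
    nlinarith
  have hquad := exp_le_one_add_add_three_quarters_mul_sq hs23
  have hsq : s ^ 2 = |s| ^ 2 := (sq_abs s).symm
  calc μ * (exp s - 1 - s) - |s| * t ≤ μ * (3 / 4 * |s| ^ 2) - |s| * t := by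
        rw [← hsq]; gcongr; linarith
    _ = -(t ^ 2 / (3 * μ)) := by rw [hs]; field_simp; ring

namespace PMF

variable {p : ℝ≥0} (hp : p ≤ 1) (k : ℕ)

theorem toReal_binomial_apply (i : Fin (k + 1)) :
    (binomial p hp k i).toReal = p ^ (i : ℕ) * (1 - p : ℝ) ^ (k - i : ℕ) * k.choose i := by
  have hp' : (p : ℝ≥0∞) ≤ 1 := by exact_mod_cast hp
  simp [binomial_apply, ENNReal.toReal_sub_of_le hp' ENNReal.one_ne_top]

theorem mgf_binomial (s : ℝ) :
    mgf (fun i : Fin (k + 1) ↦ ((i : ℕ) : ℝ)) (binomial p hp k).toMeasure s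
      = (p * exp s + (1 - p)) ^ k := by
  rw [mgf, integral_eq_sum, add_pow, ← Fin.sum_univ_eq_sum_range]
  refine Finset.sum_congr rfl fun i _ ↦ ?_
  rw [toReal_binomial_apply, smul_eq_mul, mul_pow, ← exp_nat_mul, mul_comm s]
  ring

theorem mgf_binomial_le (s : ℝ) :
    mgf (fun i : Fin (k + 1) ↦ ((i : ℕ) : ℝ)) (binomial p hp k).toMeasure s
      ≤ exp (k * p * (exp s - 1)) := by
  have hp' : (p : ℝ) ≤ 1 := hp
  rw [mgf_binomial, mul_assoc, exp_nat_mul]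
  gcongr
  have := add_one_le_exp (p * (exp s - 1))
  linarith

theorem measureReal_binomial_ge_le (s ε : ℝ) (hs : 0 ≤ s) :
    (binomial p hp k).toMeasure.real {i | ε ≤ ((i : ℕ) : ℝ)}
      ≤ exp (k * p * (exp s - 1) - s * ε) := by
  calc _ ≤ exp (-s * ε) *
        mgf (fun i : Fin (k + 1) ↦ ((i : ℕ) : ℝ)) (binomial p hp k).toMeasure s :=
        measure_ge_le_exp_mul_mgf ε hs .of_finite
    _ ≤ exp (-s * ε) * exp (k * p * (exp s - 1)) := by gcongr; exact mgf_binomial_le hp k s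
    _ = _ := by rw [← exp_add]; ring_nf

theorem measureReal_binomial_le_le (s ε : ℝ) (hs : s ≤ 0) :
    (binomial p hp k).toMeasure.real {i | ((i : ℕ) : ℝ) ≤ ε}
      ≤ exp (k * p * (exp s - 1) - s * ε) := by
  calc _ ≤ exp (-s * ε) *
        mgf (fun i : Fin (k + 1) ↦ ((i : ℕ) : ℝ)) (binomial p hp k).toMeasure s :=
        measure_le_le_exp_mul_mgf ε hs .of_finite
    _ ≤ exp (-s * ε) * exp (k * p * (exp s - 1)) := by gcongr; exact mgf_binomial_le hp k s
    _ = _ := by rw [← exp_add]; ring_nf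

theorem toMeasure_binomial_abs_sub_ge_le {t : ℝ} (ht : 0 < t) (htμ : t ≤ k * p) :
    (binomial p hp k).toMeasure {i | t ≤ |((i : ℕ) : ℝ) - k * p|}
      ≤ ENNReal.ofReal (2 * exp (-(t ^ 2 / (3 * (k * p))))) := by
  set μ : ℝ := k * p
  have hμ : 0 < μ := ht.trans_le htμ
  set l := 2 * t / (3 * μ)
  have hl : 0 ≤ l := by positivity
  have hsplit : {i : Fin (k + 1) | t ≤ |((i : ℕ) : ℝ) - μ|}
      ⊆ {i | μ + t ≤ ((i : ℕ) : ℝ)} ∪ {i | ((i : ℕ) : ℝ) ≤ μ - t} := by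
    intro i hi
    simp only [Set.mem_setOf_eq, Set.mem_union] at hi ⊢
    rcases le_abs'.1 hi with h | h
    · right; linarith
    · left; linarith
  have hupper := measureReal_binomial_ge_le hp k l (μ + t) hl
  have hlower := measureReal_binomial_le_le hp k (-l) (μ - t) (neg_nonpos.2 hl)
  have hexp_upper := mul_exp_sub_one_sub_sub_abs_mul_le hμ htμ (abs_of_nonneg hl)
  have hexp_lower :=
    mul_exp_sub_one_sub_sub_abs_mul_le hμ htμ (s := -l) (by rw [abs_neg, abs_of_nonneg hl])
  rw [← ofReal_measureReal]
  refine ENNReal.ofReal_le_ofReal ?_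
  calc _ ≤ _ := measureReal_mono hsplit
    _ ≤ _ := measureReal_union_le _ _
    _ ≤ exp (-(t ^ 2 / (3 * μ))) + exp (-(t ^ 2 / (3 * μ))) := by
        gcongr
        · refine hupper.trans (exp_le_exp.2 ?_)
          rw [abs_of_nonneg hl] at hexp_upper
          linarith
        · refine hlower.trans (exp_le_exp.2 ?_)
          rw [abs_neg, abs_of_nonneg hl] at hexp_lower
          linarith
    _ = _ := by ring

end PMF

theorem half_mul_rpow_quarter_mul_sqrt_le {c N L k : ℝ} (hc : 0 ≤ c) (hN : 0 < N)
    (hk : 1 / 2 * N ^ (3 / 4 : ℝ) * √L ≤ k) :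
    c / 2 * N ^ (1 / 4 : ℝ) * √L ≤ k * (c / √N) := by
  have hN34 : N ^ (3 / 4 : ℝ) = √N * N ^ (1 / 4 : ℝ) := by
    rw [Real.sqrt_eq_rpow, ← rpow_add hN]; norm_num
  calc c / 2 * N ^ (1 / 4 : ℝ) * √L = c / √N * (1 / 2 * N ^ (3 / 4 : ℝ) * √L) := by
        rw [hN34]; field_simp
    _ ≤ c / √N * k := by gcongr
    _ = k * (c / √N) := mul_comm _ _

theorem mul_log_le_sq_half_mul_rpow_quarter_mul_sqrt_div {c N L k : ℝ} (hc : 0 < c) (hN : 0 < N)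
    (hL : 0 ≤ L) (h2k : 2 * k ≤ N) (hμ : 0 < k * (c / √N)) :
    c / 6 * L ≤ (c / 2 * N ^ (1 / 4 : ℝ) * √L) ^ 2 / (3 * (k * (c / √N))) := by
  have hsN : 0 < √N := sqrt_pos.2 hN
  have hN14 : (N ^ (1 / 4 : ℝ)) ^ 2 = √N := by
    rw [← Real.rpow_natCast, ← rpow_mul hN.le, Real.sqrt_eq_rpow]; norm_num
  have hμle : k * (c / √N) ≤ c / 2 * √N := by
    rw [mul_div_assoc', div_le_iff₀ hsN, mul_assoc, mul_self_sqrt hN.le]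
    nlinarith
  calc c / 6 * L = c ^ 2 / 4 * √N * L / (3 * (c / 2 * √N)) := by field_simp; ring
    _ ≤ c ^ 2 / 4 * √N * L / (3 * (k * (c / √N))) := by gcongr
    _ = _ := by rw [mul_pow, mul_pow, hN14, sq_sqrt hL]; ring

/-- Concentration of the number `K` of sampled low-rank elements in the
rank-selection algorithm: for `K ~ Binomial(k, c/√N)` with mean
`μ = c·k/√N`, the probability that `K` deviates from `μ` by at least
`(c/2)·N^{1/4}·√(ln n)` is at most `2·n^{−c/6}`. -/
theorem rank_selection_pivot_concentration
    (n : ℕ) (hn : 2 ≤ n) (c : ℝ) (hc : 3 ≤ c) (N k : ℕ)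
    (hN : 0 < N)
    (hcN : c ^ 2 ≤ (N : ℝ)) (h2k : 2 * k ≤ N)
    (hklb : (1 / 2 : ℝ) * (N : ℝ) ^ ((3 : ℝ) / 4) * Real.sqrt (Real.log n)
      ≤ (k : ℝ)) :
    (PMF.binomial (Real.toNNReal (c / Real.sqrt N))
        (by
          rw [Real.toNNReal_le_one]
          have hc0 : (0 : ℝ) ≤ c := by linarith
          have h1 : c ≤ Real.sqrt N := by
            have := Real.sqrt_le_sqrt hcN
            rwa [Real.sqrt_sq hc0] at this
          have h2 : (0 : ℝ) < Real.sqrt N := lt_of_lt_of_le (by linarith) h1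
          exact div_le_one_of_le₀ h1 h2.le) k).toMeasure
      {x : Fin (k + 1) |
        (c / 2) * (N : ℝ) ^ ((1 : ℝ) / 4) * Real.sqrt (Real.log n) ≤
          |((x : ℕ) : ℝ) - c * k / Real.sqrt N|}
      ≤ ENNReal.ofReal (2 * (n : ℝ) ^ (-(c / 6))) := by
  have hc0 : 0 < c := by linarith
  have hN0 : (0 : ℝ) < N := by exact_mod_cast hN
  have hL : 0 < log n := log_pos (by exact_mod_cast hn)
  have hp : ((c / √N).toNNReal : ℝ) = c / √N := coe_toNNReal _ (by positivity)
  have ht : 0 < c / 2 * (N : ℝ) ^ (1 / 4 : ℝ) * √(log n) := by positivity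
  have htμ := half_mul_rpow_quarter_mul_sqrt_le hc0.le hN0 hklb
  have hexponent := mul_log_le_sq_half_mul_rpow_quarter_mul_sqrt_div hc0 hN0 hL.le
    (by exact_mod_cast h2k) (ht.trans_le htμ)
  rw [show c * k / √N = k * ((c / √N).toNNReal : ℝ) by rw [hp]; ring]
  refine (PMF.toMeasure_binomial_abs_sub_ge_le _ k ht (by rwa [hp])).trans
    (ENNReal.ofReal_le_ofReal ?_)
  rw [hp, rpow_def_of_pos (by positivity : (0 : ℝ) < n)]
  gcongr
  linarith
end

section
/- Let n ≥ 2 be an integer, c ≥ 3 a real number, and N, k positive integers with c² ≤ N ≤ n and 1 ≤ k < (1/2)·N^{3/4}·√(ln n). Let K be a binomial random variable with k trials and success probability p = c/√N. Then P( K ≥ c·k/√N + (c/2)·N^{1/4}·√(ln n) ) ≤ exp( −(c/6)·N^{1/4}·√(ln n) ). -/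
/-!
Exponential moments with base `2`: by Markov's inequality applied to `2 ^ K`,
`P(K ≥ a) ≤ E[2 ^ K] · 2 ^ (-a) = (1 + p) ^ k · 2 ^ (-a) ≤ exp (k p - a log 2)`.
With `a = μ + t`, where `μ = k p ≤ t` by the assumption on `k`, the exponent is at most
`μ (1 - log 2) - t log 2 ≤ t (1 - 2 log 2) ≤ -t / 3`, since `log 2 ≥ 2 / 3`.
-/

open scoped ENNReal NNReal

set_option linter.deprecated false

theorem PMF.toMeasure_le_sum_mul_rpow {α : Type*} [Fintype α] [MeasurableSpace α]
    [MeasurableSingletonClass α] (P : PMF α) (f : α → ℝ) (a : ℝ) {r : ℝ≥0∞}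
    (hr : 1 ≤ r) (hr_top : r ≠ ⊤) :
    P.toMeasure {x | a ≤ f x} ≤ (∑ x, P x * r ^ f x) * r ^ (-a) := by
  rw [PMF.toMeasure_apply_fintype, Finset.sum_mul]
  refine Finset.sum_le_sum fun x _ => ?_
  by_cases hx : a ≤ f x
  · have hr0 : r ≠ 0 := (zero_lt_one.trans_le hr).ne'
    calc Set.indicator {x | a ≤ f x} P x = P x * 1 := by simp [hx]
      _ ≤ P x * r ^ (f x - a) := by
        gcongr
        simpa using ENNReal.rpow_le_rpow_of_exponent_le hr (sub_nonneg.mpr hx)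
      _ = P x * r ^ f x * r ^ (-a) := by
        rw [mul_assoc, ← ENNReal.rpow_add _ _ hr0 hr_top, sub_eq_add_neg]
  · simp [hx]

theorem PMF.sum_binomial_mul_pow (p : ℝ≥0) (h : p ≤ 1) (k : ℕ) (r : ℝ≥0∞) :
    ∑ x, PMF.binomial p h k x * r ^ (x : ℕ) = (p * r + (1 - p)) ^ k := by
  rw [add_pow, ← Fin.sum_univ_eq_sum_range]
  refine Finset.sum_congr rfl fun x _ => ?_
  rw [PMF.binomial_apply, Fin.val_last, mul_pow]
  ring

theorem ENNReal.coe_mul_two_add_one_sub (p : ℝ≥0) (h : p ≤ 1) :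
    (p : ℝ≥0∞) * 2 + (1 - p) = 1 + p := by
  rw [mul_two, add_assoc, add_tsub_cancel_of_le (by exact_mod_cast h), add_comm]

theorem ENNReal.one_add_coe_pow_le_ofReal_exp (p : ℝ≥0) (k : ℕ) :
    (1 + (p : ℝ≥0∞)) ^ k ≤ ENNReal.ofReal (Real.exp (k * p)) := by
  rw [Real.exp_nat_mul, ENNReal.ofReal_pow (Real.exp_nonneg _)]
  gcongr ?_ ^ _
  rw [← ENNReal.ofReal_coe_nnreal, ← ENNReal.ofReal_one,
    ← ENNReal.ofReal_add zero_le_one p.coe_nonneg]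
  exact ENNReal.ofReal_le_ofReal (by linarith [Real.add_one_le_exp (p : ℝ)])

theorem ENNReal.two_rpow_eq_ofReal_exp (a : ℝ) :
    (2 : ℝ≥0∞) ^ a = ENNReal.ofReal (Real.exp (a * Real.log 2)) := by
  rw [mul_comm, ← Real.rpow_def_of_pos two_pos, ← ENNReal.ofReal_rpow_of_pos two_pos,
    ENNReal.ofReal_ofNat]

theorem PMF.binomial_toMeasure_le_ofReal_exp (p : ℝ≥0) (h : p ≤ 1) (k : ℕ) (a : ℝ) :
    (PMF.binomial p h k).toMeasure {x | a ≤ ((x : ℕ) : ℝ)} ≤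
      ENNReal.ofReal (Real.exp (k * p - a * Real.log 2)) := by
  calc (PMF.binomial p h k).toMeasure {x | a ≤ ((x : ℕ) : ℝ)}
      _ ≤ (∑ x, PMF.binomial p h k x * 2 ^ ((x : ℕ) : ℝ)) * 2 ^ (-a) :=
        PMF.toMeasure_le_sum_mul_rpow _ _ _ one_le_two ENNReal.ofNat_ne_top
      _ = (1 + (p : ℝ≥0∞)) ^ k * 2 ^ (-a) := by
        simp only [ENNReal.rpow_natCast, PMF.sum_binomial_mul_pow,
          ENNReal.coe_mul_two_add_one_sub p h]
      _ ≤ ENNReal.ofReal (Real.exp (k * p)) * ENNReal.ofReal (Real.exp (-a * Real.log 2)) := by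
        rw [ENNReal.two_rpow_eq_ofReal_exp]
        gcongr
        exact ENNReal.one_add_coe_pow_le_ofReal_exp p k
      _ = ENNReal.ofReal (Real.exp (k * p - a * Real.log 2)) := by
        rw [← ENNReal.ofReal_mul (Real.exp_nonneg _), ← Real.exp_add, neg_mul,
          ← sub_eq_add_neg]

theorem sub_add_mul_log_two_le {μ t : ℝ} (hμ : 0 ≤ μ) (hμt : μ ≤ t) :
    μ - (μ + t) * Real.log 2 ≤ -(t / 3) := by
  have h₁ := Real.log_two_gt_d9
  have h₂ := Real.log_two_lt_d9
  nlinarith [mul_nonneg (sub_nonneg.mpr hμt) (by linarith : 0 ≤ 1 - Real.log 2)]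

/-- Small-`k` case of the pivot-correctness lemma of the rank-selection
algorithm: for `K ~ Binomial(k, c/√N)` with mean `c·k/√N` and
`k < (1/2)·N^{3/4}·√(ln n)`, the upper tail beyond
`c·k/√N + (c/2)·N^{1/4}·√(ln n)` has probability at most
`exp(−(c/6)·N^{1/4}·√(ln n))`. -/
theorem rank_selection_pivot_upper_tail
    (n : ℕ) (c : ℝ) (hc : 3 ≤ c) (N k : ℕ)
    (hcN : c ^ 2 ≤ (N : ℝ))
    (hkub : (k : ℝ) <
      (1 / 2 : ℝ) * (N : ℝ) ^ ((3 : ℝ) / 4) * Real.sqrt (Real.log n)) :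
    (PMF.binomial (Real.toNNReal (c / Real.sqrt N))
        (by
          rw [Real.toNNReal_le_one]
          have hc0 : (0 : ℝ) ≤ c := by linarith
          have h1 : c ≤ Real.sqrt N := by
            have := Real.sqrt_le_sqrt hcN
            rwa [Real.sqrt_sq hc0] at this
          have h2 : (0 : ℝ) < Real.sqrt N := lt_of_lt_of_le (by linarith) h1
          exact div_le_one_of_le₀ h1 h2.le) k).toMeasure
      {x : Fin (k + 1) |
        c * k / Real.sqrt N +
            (c / 2) * (N : ℝ) ^ ((1 : ℝ) / 4) * Real.sqrt (Real.log n) ≤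
          ((x : ℕ) : ℝ)}
      ≤ ENNReal.ofReal
          (Real.exp (-(c / 6) * (N : ℝ) ^ ((1 : ℝ) / 4) *
            Real.sqrt (Real.log n))) := by
  have hN : (0 : ℝ) < N := by nlinarith
  have hq : ((c / Real.sqrt N).toNNReal : ℝ) = c / Real.sqrt N :=
    Real.coe_toNNReal _ (by positivity)
  have hmean :
      c * k / Real.sqrt N ≤ c / 2 * (N : ℝ) ^ ((1 : ℝ) / 4) * Real.sqrt (Real.log n) := by
    have hpow : (N : ℝ) ^ ((3 : ℝ) / 4) / Real.sqrt N = (N : ℝ) ^ ((1 : ℝ) / 4) := by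
      rw [Real.sqrt_eq_rpow, ← Real.rpow_sub hN]
      norm_num
    calc c * k / Real.sqrt N = k * (c / Real.sqrt N) := by ring
      _ ≤ 1 / 2 * (N : ℝ) ^ ((3 : ℝ) / 4) * Real.sqrt (Real.log n) * (c / Real.sqrt N) := by
        gcongr
      _ = c / 2 * ((N : ℝ) ^ ((3 : ℝ) / 4) / Real.sqrt N) * Real.sqrt (Real.log n) := by ring
      _ = c / 2 * (N : ℝ) ^ ((1 : ℝ) / 4) * Real.sqrt (Real.log n) := by rw [hpow]
  refine (PMF.binomial_toMeasure_le_ofReal_exp _ _ k _).trans (ENNReal.ofReal_le_ofReal ?_)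
  rw [Real.exp_le_exp, hq]
  linear_combination sub_add_mul_log_two_le (by positivity) hmean
end

section
/- Let n ≥ 2 be an integer, c ≥ 3 and 0 < ε ≤ 1 real numbers, and N, m positive integers with c² ≤ N ≤ n and m ≥ (1+ε)·N^{3/4}·√(ln n). Let X be a binomial random variable with m trials and success probability p = c/√N. Then P( X ≤ c·N^{1/4}·√(ln n) ) ≤ exp( −(c·ε²/4)·N^{1/4}·√(ln n) ). -/
/-!
Chernoff's bound: for `t ≤ 0` the indicator of `X ≤ a` is at most `e^{t(X - a)}`, and
`E e^{tX} = (1 + p(e^t - 1))^m ≤ e^{mp(e^t - 1)}`. Taking `t = -ε/2` and using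
`e^{-s} ≤ 1 - s + s²/2`, a mean `mp ≥ (1 + ε)a` bounds the exponent by
`aε²(ε - 3)/8 ≤ -ε²a/4`. For `a = c N^{1/4} √(ln n)` and `p = c/√N` the mean condition is the
hypothesis on `m`, since `N^{3/4} = N^{1/4} √N`.
-/

open Real Finset

theorem sum_exp_mul_binomial_term (m : ℕ) (p t : ℝ) :
    ∑ x ∈ range (m + 1), exp (t * x) * (p ^ x * (1 - p) ^ (m - x) * m.choose x)
      = (1 + p * (exp t - 1)) ^ m := by
  rw [show 1 + p * (exp t - 1) = p * exp t + (1 - p) by ring, add_pow]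
  refine sum_congr rfl fun x _ => ?_
  rw [mul_pow, ← exp_nat_mul, mul_comm (x : ℝ) t]
  ring

theorem one_add_pow_le_exp_mul (m : ℕ) {y : ℝ} (hy : 0 ≤ 1 + y) :
    (1 + y) ^ m ≤ exp (m * y) := by
  rw [exp_nat_mul]
  exact pow_le_pow_left₀ hy ((add_comm 1 y).trans_le (add_one_le_exp y)) m

theorem sum_binomial_term_le_exp_of_nonpos (m : ℕ) {p t : ℝ} (hp0 : 0 ≤ p) (hp1 : p ≤ 1)
    (ht : t ≤ 0) (a : ℝ) :
    ∑ x ∈ range (m + 1) with ((x : ℕ) : ℝ) ≤ a, p ^ x * (1 - p) ^ (m - x) * m.choose x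
      ≤ exp (-(t * a) + m * p * (exp t - 1)) := by
  have hq : 0 ≤ 1 - p := by linarith
  have hterm : ∀ x ∈ range (m + 1), 0 ≤ p ^ x * (1 - p) ^ (m - x) * (m.choose x : ℝ) :=
    fun x _ => by positivity
  calc ∑ x ∈ range (m + 1) with ((x : ℕ) : ℝ) ≤ a, p ^ x * (1 - p) ^ (m - x) * m.choose x
      ≤ ∑ x ∈ range (m + 1) with ((x : ℕ) : ℝ) ≤ a,
          exp (t * (x - a)) * (p ^ x * (1 - p) ^ (m - x) * m.choose x) := by
        refine sum_le_sum fun x hx => le_mul_of_one_le_left (hterm x (mem_filter.1 hx).1) ?_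
        exact one_le_exp (mul_nonneg_of_nonpos_of_nonpos ht (by linarith [(mem_filter.1 hx).2]))
    _ ≤ ∑ x ∈ range (m + 1), exp (t * (x - a)) * (p ^ x * (1 - p) ^ (m - x) * m.choose x) :=
        sum_le_sum_of_subset_of_nonneg (filter_subset _ _)
          fun x hx _ => mul_nonneg (exp_nonneg _) (hterm x hx)
    _ = exp (-(t * a)) * (1 + p * (exp t - 1)) ^ m := by
        rw [← sum_exp_mul_binomial_term, mul_sum]
        refine sum_congr rfl fun x _ => ?_
        rw [mul_sub, sub_eq_neg_add, exp_add]
        ring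
    _ ≤ exp (-(t * a)) * exp (m * (p * (exp t - 1))) := by
        gcongr
        exact one_add_pow_le_exp_mul m (by nlinarith [exp_pos t])
    _ = exp (-(t * a) + m * p * (exp t - 1)) := by rw [← exp_add, mul_assoc]

theorem PMF.binomial_apply_eq_ofReal (p : NNReal) (h : p ≤ 1) (m : ℕ) (i : Fin (m + 1)) :
    PMF.binomial p h m i
      = ENNReal.ofReal ((p : ℝ) ^ (i : ℕ) * (1 - p) ^ (m - i) * m.choose i) := by
  have hq : (0 : ℝ) ≤ 1 - p := sub_nonneg.2 (by exact_mod_cast h)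
  rw [PMF.binomial_apply, Fin.val_last, ENNReal.ofReal_mul (by positivity),
    ENNReal.ofReal_mul (by positivity), ENNReal.ofReal_pow p.coe_nonneg, ENNReal.ofReal_pow hq,
    ENNReal.ofReal_natCast, ENNReal.ofReal_sub _ p.coe_nonneg, ENNReal.ofReal_one,
    ENNReal.ofReal_coe_nnreal]

theorem PMF.binomial_toMeasure_setOf_le (p : NNReal) (h : p ≤ 1) (m : ℕ) (a : ℝ) :
    (PMF.binomial p h m).toMeasure {x : Fin (m + 1) | ((x : ℕ) : ℝ) ≤ a}
      = ENNReal.ofReal (∑ x ∈ range (m + 1) with ((x : ℕ) : ℝ) ≤ a,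
          (p : ℝ) ^ x * (1 - p) ^ (m - x) * m.choose x) := by
  have hq : (0 : ℝ) ≤ 1 - p := sub_nonneg.2 (by exact_mod_cast h)
  rw [PMF.toMeasure_apply_fintype, sum_filter,
    ENNReal.ofReal_sum_of_nonneg fun x _ => by positivity,
    ← Fin.sum_univ_eq_sum_range (fun x => ENNReal.ofReal (if (x : ℝ) ≤ a then _ else 0))]
  refine sum_congr rfl fun x _ => ?_
  simp only [Set.indicator_apply, Set.mem_ofPred_eq, PMF.binomial_apply_eq_ofReal]
  split_ifs <;> simp

theorem PMF.binomial_toMeasure_setOf_le_le_exp (p : NNReal) (h : p ≤ 1) (m : ℕ) {t : ℝ}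
    (ht : t ≤ 0) (a : ℝ) :
    (PMF.binomial p h m).toMeasure {x : Fin (m + 1) | ((x : ℕ) : ℝ) ≤ a}
      ≤ ENNReal.ofReal (exp (-(t * a) + m * p * (exp t - 1))) := by
  rw [PMF.binomial_toMeasure_setOf_le]
  exact ENNReal.ofReal_le_ofReal
    (sum_binomial_term_le_exp_of_nonpos m p.coe_nonneg (by exact_mod_cast h) ht a)

theorem exp_neg_le_one_sub_add_sq_div_two {s : ℝ} (hs : 0 ≤ s) :
    exp (-s) ≤ 1 - s + s ^ 2 / 2 := by
  rw [exp_neg, inv_le_iff_one_le_mul₀' (exp_pos s)]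
  calc (1 : ℝ) ≤ (1 + s + s ^ 2 / 2) * (1 - s + s ^ 2 / 2) := by nlinarith [pow_nonneg hs 4]
    _ ≤ exp s * (1 - s + s ^ 2 / 2) :=
      mul_le_mul_of_nonneg_right (quadratic_le_exp_of_nonneg hs) (by nlinarith)

theorem PMF.binomial_toMeasure_setOf_le_le_exp_of_mean (p : NNReal) (h : p ≤ 1) (m : ℕ)
    {ε a : ℝ} (hε0 : 0 ≤ ε) (hε1 : ε ≤ 1) (ha : 0 ≤ a) (hmean : (1 + ε) * a ≤ m * p) :
    (PMF.binomial p h m).toMeasure {x : Fin (m + 1) | ((x : ℕ) : ℝ) ≤ a}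
      ≤ ENNReal.ofReal (exp (-(ε ^ 2 / 4 * a))) := by
  have hs : 0 ≤ ε / 2 := by linarith
  refine (PMF.binomial_toMeasure_setOf_le_le_exp p h m (neg_nonpos.2 hs) a).trans
    (ENNReal.ofReal_le_ofReal (exp_le_exp.2 ?_))
  have hexp : exp (-(ε / 2)) - 1 ≤ -(ε / 2) + ε ^ 2 / 8 := by
    linarith [exp_neg_le_one_sub_add_sq_div_two hs]
  have hdrift : -(ε / 2) + ε ^ 2 / 8 ≤ 0 := by nlinarith
  calc -(-(ε / 2) * a) + m * p * (exp (-(ε / 2)) - 1)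
      ≤ ε / 2 * a + (1 + ε) * a * (-(ε / 2) + ε ^ 2 / 8) := by
        have := mul_le_mul_of_nonneg_left hexp (by positivity : (0 : ℝ) ≤ m * p)
        nlinarith [mul_le_mul_of_nonpos_right hmean hdrift]
    _ ≤ -(ε ^ 2 / 4 * a) := by
        nlinarith [mul_nonneg (mul_nonneg ha (sq_nonneg ε)) (sub_nonneg.2 hε1)]

theorem rpow_one_quarter_mul_sqrt {x : ℝ} (hx : 0 ≤ x) :
    x ^ ((1 : ℝ) / 4) * √x = x ^ ((3 : ℝ) / 4) := by
  rw [sqrt_eq_rpow, ← rpow_add' hx (by norm_num)]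
  norm_num

/-- Lower-tail bound used to show the number of active elements shrinks
quickly in the rank-selection algorithm: for `X ~ Binomial(m, c/√N)` with
`m ≥ (1+ε)·N^{3/4}·√(ln n)`, the probability that
`X ≤ c·N^{1/4}·√(ln n)` is at most `exp(−(c·ε²/4)·N^{1/4}·√(ln n))`. -/
theorem rank_selection_shrinkage
    (n : ℕ) (c ε : ℝ) (hc : 3 ≤ c) (hε0 : 0 < ε) (hε1 : ε ≤ 1)
    (N m : ℕ)
    (hcN : c ^ 2 ≤ (N : ℝ))
    (hmlb : (1 + ε) * (N : ℝ) ^ ((3 : ℝ) / 4) * Real.sqrt (Real.log n)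
      ≤ (m : ℝ)) :
    (PMF.binomial (Real.toNNReal (c / Real.sqrt N))
        (by
          rw [Real.toNNReal_le_one]
          have hc0 : (0 : ℝ) ≤ c := by linarith
          have h1 : c ≤ Real.sqrt N := by
            have := Real.sqrt_le_sqrt hcN
            rwa [Real.sqrt_sq hc0] at this
          have h2 : (0 : ℝ) < Real.sqrt N := lt_of_lt_of_le (by linarith) h1
          exact div_le_one_of_le₀ h1 h2.le) m).toMeasure
      {x : Fin (m + 1) |
        ((x : ℕ) : ℝ) ≤ c * (N : ℝ) ^ ((1 : ℝ) / 4) * Real.sqrt (Real.log n)}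
      ≤ ENNReal.ofReal
          (Real.exp (-(c * ε ^ 2 / 4) * (N : ℝ) ^ ((1 : ℝ) / 4) *
            Real.sqrt (Real.log n))) := by
  have hN : (0 : ℝ) < N := by nlinarith
  have hp : ((c / √N).toNNReal : ℝ) = c / √N := coe_toNNReal _ (by positivity)
  have hmean : (1 + ε) * (c * (N : ℝ) ^ ((1 : ℝ) / 4) * √(log n))
      ≤ m * ((c / √N).toNNReal : ℝ) := by
    calc (1 + ε) * (c * (N : ℝ) ^ ((1 : ℝ) / 4) * √(log n))
        = (1 + ε) * ((N : ℝ) ^ ((1 : ℝ) / 4) * √N) * √(log n) * (c / √N) := by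
          field_simp
      _ ≤ m * ((c / √N).toNNReal : ℝ) := by
          rw [hp, rpow_one_quarter_mul_sqrt hN.le]
          exact mul_le_mul_of_nonneg_right hmlb (by positivity)
  refine (PMF.binomial_toMeasure_setOf_le_le_exp_of_mean _ _ m hε0.le hε1 (by positivity)
    hmean).trans_eq ?_
  ring_nf
end
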